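/- Let G be a non-complete simple graph on n vertices achieving its toughness at a set S (i.e., t(G) = |S|/c(G−S)) such that every connected component of G − S is a single vertex. Then t(G) ≥ μ_2/(μ_n − δ). -/

import Mathlib

open Matrix Finset

variable {N : ℕ}

noncomputable def coeffs (A : Matrix (Fin N) (Fin N) ℝ) (hA : A.IsHermitian) (x : Fin N → ℝ) (i : Fin N) : ℝ :=
  (hA.eigenvectorBasis i : Fin N → ℝ) ⬝ᵥ x

lemma inner_eq_dot (a b : EuclideanSpace ℝ (Fin N)) :
    (inner ℝ a b : ℝ) = (a : Fin N → ℝ) ⬝ᵥ (b : Fin N → ℝ) := by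
  simp [PiLp.inner_apply, dotProduct, mul_comm]

lemma norm_decomp (A : Matrix (Fin N) (Fin N) ℝ) (hA : A.IsHermitian) (x : Fin N → ℝ) :
    x ⬝ᵥ x = ∑ i, (coeffs A hA x i)^2 := by
  have h := hA.eigenvectorBasis.sum_inner_mul_inner (𝕜 := ℝ) (WithLp.toLp 2 x) (WithLp.toLp 2 x)
  simp only [inner_eq_dot, WithLp.ofLp_toLp] at h
  rw [← h]
  refine Finset.sum_congr rfl fun i _ => ?_
  rw [dotProduct_comm x, coeffs, sq]

lemma quad_decomp (A : Matrix (Fin N) (Fin N) ℝ) (hA : A.IsHermitian) (x : Fin N → ℝ) :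
    x ⬝ᵥ (A *ᵥ x) = ∑ i, hA.eigenvalues i * (coeffs A hA x i)^2 := by
  have h := hA.eigenvectorBasis.sum_inner_mul_inner (𝕜 := ℝ) (WithLp.toLp 2 x) (WithLp.toLp 2 (A *ᵥ x : Fin N → ℝ))
  simp only [inner_eq_dot, WithLp.ofLp_toLp] at h
  rw [← h]
  refine Finset.sum_congr rfl fun i _ => ?_
  have h1 : (hA.eigenvectorBasis i : Fin N → ℝ) ⬝ᵥ (A *ᵥ x)
      = (A *ᵥ (hA.eigenvectorBasis i : Fin N → ℝ)) ⬝ᵥ x := by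
    rw [dotProduct_mulVec, ← mulVec_transpose, ← conjTranspose_eq_transpose_of_trivial, hA.eq]
  have h2 : A *ᵥ (hA.eigenvectorBasis i : Fin N → ℝ) = hA.eigenvalues i • (hA.eigenvectorBasis i : Fin N → ℝ) :=
    hA.mulVec_eigenvectorBasis i
  rw [h1, h2, smul_dotProduct, coeffs, smul_eq_mul, dotProduct_comm x]
  ring

lemma rayleigh_le_max (A : Matrix (Fin N) (Fin N) ℝ) (hA : A.IsHermitian) (t : ℝ)
    (ht : ∀ i, hA.eigenvalues i ≤ t) (x : Fin N → ℝ) :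
    x ⬝ᵥ (A *ᵥ x) ≤ t * (x ⬝ᵥ x) := by
  rw [quad_decomp A hA, norm_decomp A hA, mul_sum]
  exact sum_le_sum fun i _ => mul_le_mul_of_nonneg_right (ht i) (sq_nonneg _)

lemma rayleigh_second [NeZero N] (A : Matrix (Fin N) (Fin N) ℝ) (hA : A.PosSemidef)
    (m : ℝ) (i₀ : Fin N) (h1 : ∀ j, j ≠ i₀ → m ≤ hA.1.eigenvalues j)
    (hker : A *ᵥ (fun _ => (1:ℝ)) = 0) (x : Fin N → ℝ) (hx : ∑ i, x i = 0) :
    m * (x ⬝ᵥ x) ≤ x ⬝ᵥ (A *ᵥ x) := by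
  have hxx : (0:ℝ) ≤ x ⬝ᵥ x := Finset.sum_nonneg fun i _ => mul_self_nonneg _
  by_cases hm : m ≤ 0
  · have h0 : (0:ℝ) ≤ x ⬝ᵥ (A *ᵥ x) := by simpa using hA.dotProduct_mulVec_nonneg x
    nlinarith
  push_neg at hm
  set ones : Fin N → ℝ := fun _ => (1:ℝ) with hones
  have hQ1 : (0:ℝ) = ∑ j, hA.1.eigenvalues j * (coeffs A hA.1 ones j)^2 := by
    rw [← quad_decomp A hA.1 ones, hker, dotProduct_zero]
  have hzero : ∀ j ∈ univ, hA.1.eigenvalues j * (coeffs A hA.1 ones j)^2 = 0 :=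
    (Finset.sum_eq_zero_iff_of_nonneg
      (fun j _ => mul_nonneg (hA.eigenvalues_nonneg j) (sq_nonneg _))).1 hQ1.symm
  have hcoef : ∀ j, j ≠ i₀ → coeffs A hA.1 ones j = 0 := by
    intro j hj
    have hz := hzero j (mem_univ j)
    have hev : hA.1.eigenvalues j ≠ 0 := (lt_of_lt_of_le hm (h1 j hj)).ne'
    have := (mul_eq_zero.1 hz).resolve_left hev
    exact (pow_eq_zero_iff two_ne_zero).1 this
  have hix : ∑ j, (coeffs A hA.1 ones j) * (coeffs A hA.1 x j) = ones ⬝ᵥ x := by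
    have h := hA.1.eigenvectorBasis.sum_inner_mul_inner (𝕜 := ℝ) (WithLp.toLp 2 ones) (WithLp.toLp 2 x)
    simp only [inner_eq_dot, WithLp.ofLp_toLp] at h
    rw [← h]
    refine Finset.sum_congr rfl fun j _ => ?_
    rw [dotProduct_comm ones, coeffs, coeffs]
  have honesx : ones ⬝ᵥ x = 0 := by simpa [dotProduct, hones] using hx
  have hkey : coeffs A hA.1 ones i₀ * coeffs A hA.1 x i₀ = 0 := by
    have hsum := Finset.sum_eq_single_of_mem
      (f := fun j => coeffs A hA.1 ones j * coeffs A hA.1 x j) i₀ (mem_univ i₀)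
      (fun j _ hj => by simp only [hcoef j hj, zero_mul])
    beta_reduce at hsum
    rw [← hsum, hix, honesx]
  have hne : coeffs A hA.1 ones i₀ ≠ 0 := by
    intro h0
    have hno : ones ⬝ᵥ ones = 0 := by
      rw [norm_decomp A hA.1]
      refine Finset.sum_eq_zero fun j _ => ?_
      by_cases hj : j = i₀
      · rw [hj, h0]; ring
      · rw [hcoef j hj]; ring
    have : (N:ℝ) = 0 := by simpa [dotProduct, hones] using hno
    exact (Nat.cast_ne_zero.2 (NeZero.ne N)) this
  have hxi₀ : coeffs A hA.1 x i₀ = 0 := (mul_eq_zero.1 hkey).resolve_left hne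
  rw [quad_decomp A hA.1, norm_decomp A hA.1, mul_sum]
  refine sum_le_sum fun j _ => ?_
  by_cases hj : j = i₀
  · rw [hj, hxi₀]
    simp
  · exact mul_le_mul_of_nonneg_right (h1 j hj) (sq_nonneg _)

open SimpleGraph

/-- The (unordered) eigenvalues of the Laplacian matrix `L = D - A` of `G`. -/
noncomputable def lapEigs {V : Type*} [Fintype V] [DecidableEq V]
    (G : SimpleGraph V) [DecidableRel G.Adj] : V → ℝ :=
  (SimpleGraph.posSemidef_lapMatrix ℝ G).1.eigenvalues

/-- `μ : Fin n → ℝ` is the nondecreasing list of the Laplacian eigenvalues of `G`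
(so `μ 0 = μ_1 ≤ μ 1 = μ_2 ≤ … ≤ μ (n-1) = μ_n`). -/
def IsLapSpectrum {V : Type*} [Fintype V] [DecidableEq V]
    (G : SimpleGraph V) [DecidableRel G.Adj] {n : ℕ} (μ : Fin n → ℝ) : Prop :=
  Monotone μ ∧ ∃ σ : Fin n ≃ V, ∀ i, μ i = lapEigs G (σ i)

/-- The number of connected components of `G - S`. -/
noncomputable def numComp {V : Type*} (G : SimpleGraph V) (S : Finset V) : ℕ :=
  Nat.card (G.induce ((↑S : Set V)ᶜ)).ConnectedComponent

set_option maxHeartbeats 1000000 in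
theorem stmt6 {n : ℕ} [NeZero n] (hn : 2 ≤ n) (G : SimpleGraph (Fin n)) [DecidableRel G.Adj]
    (hnc : G ≠ ⊤) (μ : Fin n → ℝ) (hμ : IsLapSpectrum G μ)
    (S : Finset (Fin n)) (hdis : 2 ≤ numComp G S)
    (hmin : ∀ T : Finset (Fin n), 2 ≤ numComp G T →
      (S.card : ℝ) / numComp G S ≤ (T.card : ℝ) / numComp G T)
    (hsing : n - S.card = numComp G S) :
    μ ⟨1, by omega⟩ / (μ ⟨n - 1, by omega⟩ - G.minDegree) ≤ (S.card : ℝ) / numComp G S := by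
  classical
  obtain ⟨hmono, σ, hσ⟩ := hμ
  have hL : (G.lapMatrix ℝ).PosSemidef := SimpleGraph.posSemidef_lapMatrix ℝ G
  -- independence of the complement of S
  have hcard : n - S.card = Sᶜ.card := by
    rw [Finset.card_compl, Fintype.card_fin]
  have hind : ∀ u v : Fin n, u ∉ S → v ∉ S → ¬ G.Adj u v := by
    intro u v hu hv hadj
    have huv : u ≠ v := G.ne_of_adj hadj
    have hsurj : Function.Surjective
        (SimpleGraph.connectedComponentMk (G.induce ((↑S : Set (Fin n))ᶜ))) :=
      fun c => c.exists_rep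
    have hcards : Nat.card (G.induce ((↑S : Set (Fin n))ᶜ)).ConnectedComponent =
        Nat.card ((↑S : Set (Fin n))ᶜ : Set (Fin n)) := by
      have h1 : Nat.card (G.induce ((↑S : Set (Fin n))ᶜ)).ConnectedComponent = numComp G S := rfl
      rw [h1, ← hsing]
      simp only [Nat.card_eq_fintype_card, Fintype.card_compl_set, Fintype.card_fin]
      have h2 : Fintype.card (↑S : Set (Fin n)) = #S := by simp
      omega
    have hbij := (Nat.bijective_iff_surjective_and_card _).2 ⟨hsurj, hcards.symm⟩
    have h1 : (⟨u, by simpa using hu⟩ : ((↑S : Set (Fin n))ᶜ : Set (Fin n)))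
        ≠ ⟨v, by simpa using hv⟩ := by simpa using huv
    apply h1
    apply hbij.1
    apply SimpleGraph.ConnectedComponent.sound
    exact SimpleGraph.Adj.reachable (by simpa [SimpleGraph.comap_adj] using hadj)
  -- eigenvalue generalities
  simp only [lapEigs] at hσ
  have hLker : G.lapMatrix ℝ *ᵥ (fun _ => (1:ℝ)) = 0 :=
    SimpleGraph.lapMatrix_mulVec_const_eq_zero G
  have hmax : ∀ j, hL.1.eigenvalues j ≤ μ ⟨n-1, by omega⟩ := by
    intro j
    have h1 : μ (σ.symm j) = hL.1.eigenvalues j := by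
      have := hσ (σ.symm j)
      rwa [Equiv.apply_symm_apply] at this
    rw [← h1]
    apply hmono
    rw [Fin.le_def]
    have := (σ.symm j).isLt
    simp only []
    omega
  have hsec : ∀ j, j ≠ σ 0 → μ ⟨1, by omega⟩ ≤ hL.1.eigenvalues j := by
    intro j hj
    have h1 : μ (σ.symm j) = hL.1.eigenvalues j := by
      have := hσ (σ.symm j)
      rwa [Equiv.apply_symm_apply] at this
    rw [← h1]
    apply hmono
    have h2 : σ.symm j ≠ 0 := by
      intro h0
      apply hj
      rw [← h0, Equiv.apply_symm_apply]
    have h3 : (σ.symm j).val ≠ 0 := fun h => h2 (Fin.ext (by simpa using h))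
    rw [Fin.le_def]
    simp only []
    omega
  have hnonneg : ∀ i : Fin n, 0 ≤ μ i := fun i => by
    rw [hσ i]; exact hL.eigenvalues_nonneg _
  by_cases hS0 : S.card = 0
  · -- the graph has no edges at all
    have hSempty : S = ∅ := Finset.card_eq_zero.1 hS0
    have hadj0 : ∀ a b : Fin n, ¬ G.Adj a b := fun a b =>
      hind a b (by simp [hSempty]) (by simp [hSempty])
    have hdeg0 : ∀ i, G.degree i = 0 := by
      intro i
      rw [← SimpleGraph.card_neighborFinset_eq_degree]
      rw [Finset.card_eq_zero]
      ext w
      simp [hadj0]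
    have hL0 : G.lapMatrix ℝ = 0 := by
      ext i j
      simp [SimpleGraph.lapMatrix, SimpleGraph.degMatrix, Matrix.diagonal, hdeg0, hadj0]
    have hentry : ∀ a b, G.lapMatrix ℝ a b = 0 := fun a b => by rw [hL0]; rfl
    have heig0 : ∀ j, hL.1.eigenvalues j = 0 := by
      intro j
      set w : Fin n → ℝ := ((hL.1.eigenvectorBasis j : EuclideanSpace ℝ (Fin n)) : Fin n → ℝ)
        with hwdef
      have h2 : G.lapMatrix ℝ *ᵥ w = hL.1.eigenvalues j • w :=
        hL.1.mulVec_eigenvectorBasis j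
      have h5 : G.lapMatrix ℝ *ᵥ w = 0 := by
        funext k
        simp [Matrix.mulVec, dotProduct, hentry]
      rw [h5] at h2
      by_contra hne
      have h3 := (smul_eq_zero.1 h2.symm).resolve_left hne
      have hb := hL.1.eigenvectorBasis.orthonormal.ne_zero j
      apply hb
      apply PiLp.ext
      intro k
      simpa [hwdef] using congrFun h3 k
    have hμ0 : ∀ i : Fin n, μ i = 0 := fun i => by rw [hσ i]; exact heig0 _
    have hδ0 : G.minDegree = 0 := by
      have h1 := G.minDegree_le_degree (⟨0, by omega⟩ : Fin n)
      rw [hdeg0] at h1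
      omega
    rw [hμ0, hμ0, hδ0, hS0]
    norm_num
  · -- main case
    have hSle : S.card ≤ n := by
      have := Finset.card_le_univ S
      simpa using this
    have hs1 : 1 ≤ S.card := Nat.one_le_iff_ne_zero.2 hS0
    have hc2 : 2 ≤ numComp G S := hdis
    have hsn : S.card + numComp G S = n := by omega
    have hcardI : Sᶜ.card = numComp G S := by omega
    -- choose the two minimum-degree vertices of the independent set
    have hInonempty : (Sᶜ : Finset (Fin n)).Nonempty := by
      rw [← Finset.card_pos]; omega
    obtain ⟨u, huI, humin⟩ := Finset.exists_min_image Sᶜ (fun w => G.degree w) hInonempty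
    have hI'ne : (Sᶜ.erase u).Nonempty := by
      rw [← Finset.card_pos, Finset.card_erase_of_mem huI]; omega
    obtain ⟨v, hvI', hvmin⟩ := Finset.exists_min_image _ (fun w => G.degree w) hI'ne
    have hvI : v ∈ Sᶜ := Finset.mem_of_mem_erase hvI'
    have huv : u ≠ v := (Finset.ne_of_mem_erase hvI').symm
    have huS : u ∉ S := Finset.mem_compl.1 huI
    have hvS : v ∉ S := Finset.mem_compl.1 hvI
    have hnadj : ¬ G.Adj u v := hind u v huS hvS
    have hd12 : G.degree u ≤ G.degree v := humin v hvI
    -- real abbreviations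
    set m1 : ℝ := μ ⟨1, by omega⟩ with hm1def
    set mn : ℝ := μ ⟨n-1, by omega⟩ with hmndef
    set d1 : ℝ := (G.degree u : ℝ) with hd1def
    set d2 : ℝ := (G.degree v : ℝ) with hd2def
    set sR : ℝ := (S.card : ℝ) with hsRdef
    set cR : ℝ := ((numComp G S : ℕ) : ℝ) with hcRdef
    set e : ℝ := ∑ w ∈ Sᶜ, (G.degree w : ℝ) with hedef
    have hcast : sR + cR = (n:ℝ) := by
      rw [hsRdef, hcRdef]
      exact_mod_cast congrArg (Nat.cast : ℕ → ℝ) hsn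
    have hs1R : (1:ℝ) ≤ sR := by rw [hsRdef]; exact_mod_cast hs1
    have hc2R : (2:ℝ) ≤ cR := by rw [hcRdef]; exact_mod_cast hc2
    have hd12R : d1 ≤ d2 := by rw [hd1def, hd2def]; exact_mod_cast hd12
    have hd1nn : (0:ℝ) ≤ d1 := Nat.cast_nonneg _
    have hd2nn : (0:ℝ) ≤ d2 := Nat.cast_nonneg _
    have hnRpos : (0:ℝ) < n := by linarith
    have hcRpos : (0:ℝ) < cR := by linarith
    have hsRpos : (0:ℝ) < sR := by linarith
    -- F4 : lower bound on e
    have hF4 : d1 + (cR-1) * d2 ≤ e := by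
      rw [hedef, ← Finset.add_sum_erase _ _ huI]
      have hcardI' : (Sᶜ.erase u).card = numComp G S - 1 := by
        rw [Finset.card_erase_of_mem huI]; omega
      have hle : ∀ w ∈ Sᶜ.erase u, d2 ≤ (G.degree w:ℝ) := fun w hw =>
        Nat.cast_le.2 (hvmin w hw)
      have h5 := Finset.card_nsmul_le_sum (Sᶜ.erase u) (fun w => (G.degree w : ℝ)) d2 hle
      rw [hcardI'] at h5
      have h6 : ((numComp G S - 1 : ℕ) : ℝ) = cR - 1 := by
        rw [hcRdef]
        have : (1:ℕ) ≤ numComp G S := by omega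
        push_cast [Nat.cast_sub this]
        ring
      rw [nsmul_eq_mul, h6] at h5
      linarith
    -- F1 : Rayleigh bound for the second eigenvalue
    set x : Fin n → ℝ := fun i => (if i = u then (1:ℝ) else 0) - (if i = v then 1 else 0)
      with hxdef
    have hxsum : ∑ i, x i = 0 := by
      simp [hxdef, Finset.sum_sub_distrib]
    have hxx : x ⬝ᵥ x = 2 := by
      have hsq : ∀ i, x i * x i =
          (if i = u then (1:ℝ) else 0) + (if i = v then 1 else 0) := by
        intro i
        by_cases h : i = u
        · subst h
          have : i ≠ v := huv
          simp [hxdef, this]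
        · by_cases h' : i = v
          · subst h'
            simp [hxdef, h]
          · simp [hxdef, h, h']
      unfold dotProduct
      rw [Finset.sum_congr rfl (fun i _ => hsq i)]
      rw [Finset.sum_add_distrib]
      simp [Finset.sum_ite_eq']
      norm_num
    have hnbru : ∑ w ∈ G.neighborFinset u, x w = 0 := by
      rw [hxdef]
      rw [Finset.sum_sub_distrib]
      rw [Finset.sum_ite_eq' _ u (fun _ => (1:ℝ)), Finset.sum_ite_eq' _ v (fun _ => (1:ℝ))]
      simp [hnadj]
    have hnbrv : ∑ w ∈ G.neighborFinset v, x w = 0 := by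
      rw [hxdef]
      rw [Finset.sum_sub_distrib]
      rw [Finset.sum_ite_eq' _ u (fun _ => (1:ℝ)), Finset.sum_ite_eq' _ v (fun _ => (1:ℝ))]
      have : ¬ G.Adj v u := fun h => hnadj h.symm
      simp [this]
    have hQx : x ⬝ᵥ (G.lapMatrix ℝ *ᵥ x) = d1 + d2 := by
      unfold dotProduct
      have hterm : ∀ i, x i * (G.lapMatrix ℝ *ᵥ x) i =
          (if i = u then (G.degree u : ℝ) * x u - ∑ w ∈ G.neighborFinset u, x w else 0)
          - (if i = v then (G.degree v : ℝ) * x v - ∑ w ∈ G.neighborFinset v, x w else 0) := by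
        intro i
        rw [SimpleGraph.lapMatrix_mulVec_apply]
        by_cases h : i = u
        · subst h
          have : i ≠ v := huv
          simp [hxdef, this]
        · by_cases h' : i = v
          · subst h'
            simp [hxdef, h]
          · have hx0 : x i = 0 := by simp [hxdef, h, h']
            rw [hx0]
            simp [h, h']
      rw [Finset.sum_congr rfl (fun i _ => hterm i)]
      rw [Finset.sum_sub_distrib]
      rw [Finset.sum_ite_eq' _ u, Finset.sum_ite_eq' _ v]
      have hxu : x u = 1 := by simp [hxdef, huv]
      have hxv : x v = -1 := by
        have : v ≠ u := fun h => huv h.symm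
        simp [hxdef, this]
      simp only [Finset.mem_univ, if_true]
      rw [hxu, hxv, hnbru, hnbrv, hd1def, hd2def]
      ring
    have hF1 : m1 * 2 ≤ d1 + d2 := by
      have h := rayleigh_second (G.lapMatrix ℝ) hL m1 (σ 0)
        (fun j hj => hsec j hj) hLker x hxsum
      rwa [hxx, hQx] at h
    -- F2 : Rayleigh bound for the largest eigenvalue
    set y : Fin n → ℝ := fun i => if i ∈ S then -cR else sR with hydef
    have hnbrS : ∀ w, w ∉ S → ∀ z ∈ G.neighborFinset w, z ∈ S := by
      intro w hw z hz
      by_contra hzS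
      exact hind w z hw hzS (by simpa using hz)
    have hLyI : ∀ i, i ∉ S → (G.lapMatrix ℝ *ᵥ y) i = (G.degree i : ℝ) * n := by
      intro i hi
      rw [SimpleGraph.lapMatrix_mulVec_apply]
      have hconst : ∀ z ∈ G.neighborFinset i, y z = -cR := fun z hz => by
        simp only [hydef]
        rw [if_pos (hnbrS i hi z hz)]
      have hsum : ∑ z ∈ G.neighborFinset i, y z = (G.degree i : ℝ) * (-cR) := by
        rw [Finset.sum_congr rfl hconst, Finset.sum_const,
          ← SimpleGraph.card_neighborFinset_eq_degree]
        simp [mul_comm]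
      rw [hsum, hydef]
      simp only [if_neg hi]
      have : (G.degree i : ℝ) * sR - (G.degree i : ℝ) * (-cR) = (G.degree i : ℝ) * (sR + cR) := by ring
      rw [this, hcast]
    have honesLy : (fun _ => (1:ℝ)) ⬝ᵥ (G.lapMatrix ℝ *ᵥ y) = 0 := by
      rw [Matrix.dotProduct_mulVec]
      have h1 : (fun _ => (1:ℝ)) ᵥ* G.lapMatrix ℝ = 0 := by
        rw [← Matrix.mulVec_transpose, (SimpleGraph.isSymm_lapMatrix (R := ℝ) (G := G)).eq]
        exact hLker
      rw [h1, zero_dotProduct]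
    have hQy : y ⬝ᵥ (G.lapMatrix ℝ *ᵥ y) = (n:ℝ)^2 * e := by
      set z := G.lapMatrix ℝ *ᵥ y with hzdef
      have hsumz : ∑ i, z i = 0 := by
        have := honesLy
        unfold dotProduct at this
        simpa using this
      have hzI : ∑ i ∈ Sᶜ, z i = e * n := by
        rw [Finset.sum_congr rfl (fun i hi => hLyI i (Finset.mem_compl.1 hi))]
        rw [hedef, Finset.sum_mul]
      have hzS : ∑ i ∈ S, z i = - (e * n) := by
        have h7 := Finset.sum_add_sum_compl S z
        rw [hsumz, hzI] at h7
        linarith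
      have hsplit : y ⬝ᵥ z = ∑ i ∈ S, y i * z i + ∑ i ∈ Sᶜ, y i * z i := by
        unfold dotProduct
        rw [Finset.sum_add_sum_compl S (fun i => y i * z i)]
      rw [hsplit]
      have hyS : ∑ i ∈ S, y i * z i = -cR * ∑ i ∈ S, z i := by
        rw [Finset.mul_sum]
        exact Finset.sum_congr rfl (fun i hi => by rw [hydef]; simp [if_pos hi])
      have hyI : ∑ i ∈ Sᶜ, y i * z i = sR * ∑ i ∈ Sᶜ, z i := by
        rw [Finset.mul_sum]
        exact Finset.sum_congr rfl (fun i hi => by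
          rw [hydef]; simp [if_neg (Finset.mem_compl.1 hi)])
      rw [hyS, hyI, hzS, hzI]
      have : -cR * -(e * n) + sR * (e * n) = (sR + cR) * (e * n) := by ring
      rw [this, hcast]
      ring
    have hyy : y ⬝ᵥ y = sR * cR * n := by
      unfold dotProduct
      rw [← Finset.sum_add_sum_compl S (fun i => y i * y i)]
      have hc1 : ∀ i ∈ S, y i * y i = cR * cR := fun i hi => by
        simp only [hydef]
        rw [if_pos hi]
        ring
      have hc2' : ∀ i ∈ Sᶜ, y i * y i = sR * sR := fun i hi => by
        simp only [hydef]
        rw [if_neg (Finset.mem_compl.1 hi)]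
      have hyS : ∑ i ∈ S, y i * y i = sR * (cR * cR) := by
        rw [Finset.sum_congr rfl hc1, Finset.sum_const, hsRdef, nsmul_eq_mul]
      have hyI : ∑ i ∈ Sᶜ, y i * y i = cR * (sR * sR) := by
        rw [Finset.sum_congr rfl hc2', Finset.sum_const, hcardI, hcRdef, nsmul_eq_mul]
      rw [hyS, hyI, ← hcast]
      ring
    have hF2 : (n:ℝ)^2 * e ≤ mn * (sR * cR * n) := by
      have h := rayleigh_le_max (G.lapMatrix ℝ) hL.1 mn hmax y
      rwa [hQy, hyy] at h
    have hF2' : (sR + cR) * e ≤ mn * (sR * cR) := by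
      have h2 : ((sR+cR) * e) * n ≤ (mn * (sR * cR)) * n := by
        rw [hcast]; nlinarith [hF2]
      exact le_of_mul_le_mul_right h2 hnRpos
    -- min degree
    have hδ : (G.minDegree : ℝ) ≤ d1 := Nat.cast_le.2 (G.minDegree_le_degree u)
    have hδ0 : (0:ℝ) ≤ (G.minDegree : ℝ) := Nat.cast_nonneg _
    have hm1nn : (0:ℝ) ≤ m1 := hnonneg _
    -- forget everything that is not needed for the final arithmetic
    clear_value x y m1 mn d1 d2 sR cR e
    clear hxdef hydef hxsum hxx hQx hnbru hnbrv hQy hyy hF2 honesLy hLyI hnbrS x y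
    clear hm1def hmndef hd1def hd2def hsRdef hcRdef hedef
    clear hσ hsec hmax hmin hLker hL hind hnonneg hmono σ μ
    -- conclude
    rcases le_or_gt (mn - (G.minDegree : ℝ)) 0 with hle|hgt
    · have hLHS : m1 / (mn - (G.minDegree : ℝ)) ≤ 0 :=
        div_nonpos_iff.2 (Or.inl ⟨hm1nn, hle⟩)
      have hRHS : (0:ℝ) ≤ sR / cR := by positivity
      calc m1 / (mn - (G.minDegree:ℝ)) ≤ 0 := hLHS
        _ ≤ sR / cR := hRHS
    · rw [div_le_div_iff₀ hgt hcRpos]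
      have hcoef : (0:ℝ) ≤ sR*cR - sR + cR*cR/2 - cR := by
        nlinarith [mul_nonneg (by linarith : (0:ℝ) ≤ sR) (by linarith : (0:ℝ) ≤ cR - 1),
          mul_nonneg (by linarith : (0:ℝ) ≤ cR) (by linarith : (0:ℝ) ≤ cR - 2)]
      have hA1 : m1 * (cR*cR) ≤ (d1+d2)/2 * (cR*cR) :=
        mul_le_mul_of_nonneg_right (by linarith) (by positivity)
      have hA2 : (d1+d2)/2 * (cR*cR) ≤ (sR+cR)*(d1+(cR-1)*d2) - sR*d1*cR := by
        nlinarith [mul_nonneg (sub_nonneg.2 hd12R) hcoef]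
      have hA3 : (sR+cR)*(d1+(cR-1)*d2) ≤ (sR+cR)*e :=
        mul_le_mul_of_nonneg_left hF4 (by linarith)
      have hA5 : sR*(G.minDegree : ℝ)*cR ≤ sR*d1*cR := by
        nlinarith [mul_nonneg (mul_nonneg (sub_nonneg.2 hδ) (le_of_lt hsRpos)) (le_of_lt hcRpos)]
      have hfinal : (m1 * cR) * cR ≤ (sR * (mn - (G.minDegree:ℝ))) * cR := by
        linarith [hA1, hA2, hA3, hF2', hA5]
      exact le_of_mul_le_mul_right hfinal hcRpos
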